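/- arXiv:2001.00221 — 5 statements merged into one kernel-verified Lean document; each statement's English description precedes it below -/
import Mathlib

section
/- For every finite simple graph G without isolated vertices, max{χ(G), γ_t(G)} ≤ χ_td(G) ≤ γ_t(G) + χ(G), where χ(G) is the chromatic number, γ_t(G) the total domination number, and χ_td(G) the total dominator chromatic number. -/
/-- The vertex type of the Kneser graph `KG(n,2)`: 2-element subsets of `{0,…,n-1}`. -/
abbrev KVert (n : ℕ) := {s : Finset (Fin n) // s.card = 2}

/-- The Kneser graph `KG(n,2)`: vertices are 2-subsets, adjacent iff disjoint. -/
def KG2 (n : ℕ) : SimpleGraph (KVert n) where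
  Adj u v := Disjoint u.1 v.1
  symm := ⟨fun u v h => h.symm⟩
  loopless := ⟨fun u h => by
    have h2 := u.2
    have h' : Disjoint u.1 u.1 := h
    rw [disjoint_self] at h'
    simp [h'] at h2⟩

/-- A proper coloring of `G` with `k` (nonempty) color classes: a partition of the
vertex set into `k` nonempty independent sets. -/
def IsProperColoring {V : Type*} (G : SimpleGraph V) {k : ℕ} (C : Fin k → Set V) : Prop :=
  (∀ v, ∃! i, v ∈ C i) ∧ (∀ i, (C i).Nonempty) ∧
    ∀ i, ∀ u ∈ C i, ∀ w ∈ C i, ¬ G.Adj u w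

/-- A total dominator coloring: a proper coloring such that every vertex is adjacent to
all vertices of some (nonempty) color class. -/
def IsTDColoring {V : Type*} (G : SimpleGraph V) {k : ℕ} (C : Fin k → Set V) : Prop :=
  IsProperColoring G C ∧ ∀ v, ∃ i, (C i).Nonempty ∧ ∀ u ∈ C i, G.Adj v u

/-- The chromatic number: minimum number of color classes in a proper coloring. -/
noncomputable def chromNum {V : Type*} (G : SimpleGraph V) : ℕ :=
  sInf {k | ∃ C : Fin k → Set V, IsProperColoring G C}

/-- The total dominator chromatic number: minimum number of color classes in a TDC. -/
noncomputable def tdChromNum {V : Type*} (G : SimpleGraph V) : ℕ :=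
  sInf {k | ∃ C : Fin k → Set V, IsTDColoring G C}

/-- A total dominating set: every vertex has a neighbor in `S`. -/
def IsTotalDomSet {V : Type*} (G : SimpleGraph V) (S : Set V) : Prop :=
  ∀ v, ∃ u ∈ S, G.Adj v u

/-- The total domination number: minimum size of a total dominating set. -/
noncomputable def totalDomNum {V : Type*} [Fintype V] (G : SimpleGraph V) : ℕ :=
  sInf {k | ∃ S : Finset V, IsTotalDomSet G ↑S ∧ S.card = k}

/-- A set of vertices of `KG(n,2)` is starlike if all its 2-subsets share a common symbol. -/
def Starlike {n : ℕ} (A : Set (KVert n)) : Prop :=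
  ∃ a : Fin n, ∀ v ∈ A, a ∈ v.1

/-- A set of vertices of `KG(n,2)` is triangular if it equals `{{a,b},{a,c},{b,c}}`
for three distinct symbols `a, b, c`. -/
def Triangular {n : ℕ} (A : Set (KVert n)) : Prop :=
  ∃ a b c : Fin n, a ≠ b ∧ a ≠ c ∧ b ≠ c ∧
    A = {v : KVert n | v.1 = {a, b} ∨ v.1 = {a, c} ∨ v.1 = {b, c}}


/-!
A total dominator coloring is in particular a proper coloring, and choosing one vertex from
each class it totally dominates yields a total dominating set, so `χ_td` bounds both `χ` and
`γₜ`. Conversely, from a minimum total dominating set `S` and a minimum proper coloring,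
colour each vertex of `S` by its own singleton class and keep the remaining parts of the old
classes: every vertex has a neighbour in `S`, hence is adjacent to a whole singleton class.
-/

namespace SimpleGraph

variable {V : Type*} (G : SimpleGraph V)

lemma exists_isTDColoring_of_partition {ι : Type*} [Fintype ι] (C : ι → Set V)
    (hpart : ∀ v, ∃! i, v ∈ C i) (hne : ∀ i, (C i).Nonempty)
    (hind : ∀ i, ∀ u ∈ C i, ∀ w ∈ C i, ¬ G.Adj u w)
    (hdom : ∀ v, ∃ i, ∀ u ∈ C i, G.Adj v u) :
    ∃ C' : Fin (Fintype.card ι) → Set V, IsTDColoring G C' := by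
  let e := Fintype.equivFin ι
  refine ⟨C ∘ e.symm, ⟨fun v => ?_, fun j => hne _, fun j => hind _⟩, fun v => ?_⟩
  · obtain ⟨i, hi, huniq⟩ := hpart v
    exact ⟨e i, by simpa using hi, fun j hj => e.symm_apply_eq.mp (huniq _ hj)⟩
  · obtain ⟨i, hadj⟩ := hdom v
    exact ⟨e i, by simpa using hne i, fun u hu => hadj u (by simpa using hu)⟩

lemma exists_isTDColoring [Fintype V] (hiso : ∀ v, ∃ u, G.Adj v u) :
    ∃ k, ∃ C : Fin k → Set V, IsTDColoring G C :=
  ⟨_, G.exists_isTDColoring_of_partition (fun v => {v})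
    (fun v => ⟨v, rfl, fun _ hw => hw.symm⟩) (fun v => ⟨v, rfl⟩)
    (fun _ u hu w hw => by rw [hu, hw]; exact G.irrefl)
    (fun v => (hiso v).imp fun u hu w hw => hw ▸ hu)⟩

lemma exists_isTDColoring_tdChromNum [Fintype V] (hiso : ∀ v, ∃ u, G.Adj v u) :
    ∃ C : Fin (tdChromNum G) → Set V, IsTDColoring G C :=
  Nat.sInf_mem (G.exists_isTDColoring hiso)

lemma exists_isProperColoring_chromNum [Fintype V] (hiso : ∀ v, ∃ u, G.Adj v u) :
    ∃ C : Fin (chromNum G) → Set V, IsProperColoring G C :=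
  Nat.sInf_mem (s := {k | ∃ C : Fin k → Set V, IsProperColoring G C}) <|
    (G.exists_isTDColoring hiso).imp fun _ ⟨C, hC⟩ => ⟨C, hC.1⟩

lemma exists_isTotalDomSet_card_totalDomNum [Fintype V] (hiso : ∀ v, ∃ u, G.Adj v u) :
    ∃ S : Finset V, IsTotalDomSet G ↑S ∧ S.card = totalDomNum G :=
  Nat.sInf_mem (s := {k | ∃ S : Finset V, IsTotalDomSet G ↑S ∧ S.card = k})
    ⟨_, Finset.univ, fun v => (hiso v).imp fun u hu => ⟨by simp, hu⟩, rfl⟩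

lemma chromNum_le_of_isTDColoring {k : ℕ} {C : Fin k → Set V} (hC : IsTDColoring G C) :
    chromNum G ≤ k :=
  Nat.sInf_le ⟨C, hC.1⟩

lemma totalDomNum_le_of_isTDColoring [Fintype V] {k : ℕ} {C : Fin k → Set V}
    (hC : IsTDColoring G C) : totalDomNum G ≤ k := by
  classical
  choose r hr using hC.1.2.1
  have hdom : IsTotalDomSet G ↑(Finset.univ.image r) := fun v => by
    obtain ⟨i, -, hadj⟩ := hC.2 v
    exact ⟨r i, by simp, hadj _ (hr i)⟩
  calc totalDomNum G ≤ (Finset.univ.image r).card := Nat.sInf_le ⟨_, hdom, rfl⟩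
    _ ≤ k := Finset.card_image_le.trans (by simp)

lemma tdChromNum_le_card_add {S : Finset V} (hS : IsTotalDomSet G ↑S) {k : ℕ}
    {C : Fin k → Set V} (hC : IsProperColoring G C) : tdChromNum G ≤ S.card + k := by
  classical
  let D : S ⊕ {i // (C i \ ↑S).Nonempty} → Set V
    | .inl s => {(s : V)}
    | .inr i => C i \ ↑S
  have hpart : ∀ v, ∃! j, v ∈ D j := by
    intro v
    by_cases hv : v ∈ S
    · refine ⟨.inl ⟨v, hv⟩, rfl, ?_⟩
      rintro (⟨s, hs⟩ | ⟨i, hi⟩) hj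
      · cases hj; rfl
      · exact absurd hv hj.2
    · obtain ⟨i, hi, huniq⟩ := hC.1 v
      refine ⟨.inr ⟨i, v, hi, hv⟩, ⟨hi, hv⟩, ?_⟩
      rintro (⟨s, hs⟩ | ⟨i', hi'⟩) hj
      · cases hj; exact absurd hs hv
      · cases huniq i' hj.1; rfl
  have hne : ∀ j, (D j).Nonempty
    | .inl s => ⟨s, rfl⟩
    | .inr i => i.2
  have hind : ∀ j, ∀ u ∈ D j, ∀ w ∈ D j, ¬ G.Adj u w
    | .inl _, _, hu, _, hw => by rw [hu, hw]; exact G.irrefl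
    | .inr i, u, hu, w, hw => hC.2.2 i u hu.1 w hw.1
  have hdom : ∀ v, ∃ j, ∀ u ∈ D j, G.Adj v u := fun v => by
    obtain ⟨u, huS, hadj⟩ := hS v
    exact ⟨.inl ⟨u, huS⟩, fun w hw => hw ▸ hadj⟩
  obtain ⟨D', hD'⟩ := G.exists_isTDColoring_of_partition D hpart hne hind hdom
  calc tdChromNum G ≤ Fintype.card (S ⊕ {i // (C i \ ↑S).Nonempty}) := Nat.sInf_le ⟨D', hD'⟩
    _ ≤ S.card + k := by
      rw [Fintype.card_sum, Fintype.card_coe]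
      exact Nat.add_le_add_left ((Fintype.card_subtype_le _).trans_eq (Fintype.card_fin k)) _

end SimpleGraph

/-- For every finite simple graph `G` without isolated vertices,
`max {χ(G), γₜ(G)} ≤ χ_td(G) ≤ γₜ(G) + χ(G)`. -/
theorem stmt0 {V : Type*} [Fintype V] (G : SimpleGraph V)
    (hiso : ∀ v : V, ∃ u : V, G.Adj v u) :
    max (chromNum G) (totalDomNum G) ≤ tdChromNum G ∧
      tdChromNum G ≤ totalDomNum G + chromNum G := by
  obtain ⟨C, hC⟩ := G.exists_isTDColoring_tdChromNum hiso
  obtain ⟨S, hS, hScard⟩ := G.exists_isTotalDomSet_card_totalDomNum hiso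
  obtain ⟨P, hP⟩ := G.exists_isProperColoring_chromNum hiso
  refine ⟨max_le (G.chromNum_le_of_isTDColoring hC) (G.totalDomNum_le_of_isTDColoring hC), ?_⟩
  simpa [hScard] using G.tdChromNum_le_card_add hS hP
end

section
/- For every integer n ≥ 4, the total domination number of the Kneser graph KG(n,2) equals 6 if n = 4, equals 4 if n = 5, and equals 3 if n ≥ 6. -/
/-! A total dominating set of `KG(n,2)` contains an edge `{s, u}`, and a pair meeting both `s`
and `u` is dominated by neither, so at least three vertices are needed. For `n ≥ 6` three pairwise
disjoint pairs suffice, since a pair cannot meet all three. For `n = 5` the graph is the 3-regular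
Petersen graph on 10 vertices, which forces `⌈10/3⌉ = 4` vertices. For `n = 4` every pair is
adjacent only to its complement, so every vertex is needed. -/

open Finset

namespace SimpleGraph

variable {V : Type*} {G : SimpleGraph V}

theorem IsTotalDomSet.mem_of_neighborSet_eq {S : Set V} (hS : IsTotalDomSet G S) {v w : V}
    (hw : G.neighborSet w = {v}) : v ∈ S := by
  obtain ⟨u, hu, hwu⟩ := hS w
  have hu_eq : u = v := Set.mem_singleton_iff.1 (hw ▸ hwu)
  exact hu_eq ▸ hu

theorem IsTotalDomSet.exists_adj [Nonempty V] {S : Set V} (hS : IsTotalDomSet G S) :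
    ∃ s ∈ S, ∃ u ∈ S, G.Adj s u := by
  obtain ⟨s, hs, -⟩ := hS (Classical.arbitrary V)
  obtain ⟨u, hu, hsu⟩ := hS s
  exact ⟨s, hs, u, hu, hsu⟩

theorem IsTotalDomSet.card_le_maxDegree_mul [Fintype V] [DecidableRel G.Adj] {S : Finset V}
    (hS : IsTotalDomSet G S) : Fintype.card V ≤ G.maxDegree * #S := by
  classical
  have hcover : (univ : Finset V) ⊆ S.biUnion fun u => G.neighborFinset u := fun v _ => by
    obtain ⟨u, hu, hvu⟩ := hS v
    exact mem_biUnion.2 ⟨u, hu, (mem_neighborFinset _ _ _).2 hvu.symm⟩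
  calc Fintype.card V ≤ #(S.biUnion fun u => G.neighborFinset u) := card_le_card hcover
    _ ≤ ∑ u ∈ S, G.degree u := card_biUnion_le
    _ ≤ ∑ _u ∈ S, G.maxDegree := sum_le_sum fun u _ => G.degree_le_maxDegree u
    _ = G.maxDegree * #S := by rw [sum_const, smul_eq_mul, mul_comm]

theorem totalDomNum_eq_of_forall_le_card [Fintype V] {m : ℕ}
    (hle : ∀ S : Finset V, IsTotalDomSet G S → m ≤ #S)
    (hex : ∃ S : Finset V, IsTotalDomSet G S ∧ #S = m) : totalDomNum G = m :=
  IsLeast.csInf_eq ⟨hex, by rintro _ ⟨S, hS, rfl⟩; exact hle S hS⟩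

end SimpleGraph

theorem Finset.three_le_card_of_not_disjoint {α : Type*} {v p q r : Finset α}
    (hpq : Disjoint p q) (hpr : Disjoint p r) (hqr : Disjoint q r)
    (hp : ¬Disjoint v p) (hq : ¬Disjoint v q) (hr : ¬Disjoint v r) : 3 ≤ #v := by
  classical
  obtain ⟨a, hav, hap⟩ := not_disjoint_iff.1 hp
  obtain ⟨b, hbv, hbq⟩ := not_disjoint_iff.1 hq
  obtain ⟨c, hcv, hcr⟩ := not_disjoint_iff.1 hr
  have hab : a ≠ b := fun h => disjoint_left.1 hpq hap (h ▸ hbq)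
  have hac : a ≠ c := fun h => disjoint_left.1 hpr hap (h ▸ hcr)
  have hbc : b ≠ c := fun h => disjoint_left.1 hqr hbq (h ▸ hcr)
  calc 3 = #{a, b, c} := (card_eq_three.2 ⟨a, b, c, hab, hac, hbc, rfl⟩).symm
    _ ≤ #v := card_le_card (by simp [insert_subset_iff, hav, hbv, hcv])

def KVert.pair {n : ℕ} {a b : Fin n} (h : a ≠ b) : KVert n := ⟨{a, b}, card_pair h⟩

namespace KG2

open SimpleGraph

variable {n : ℕ}

@[simp] theorem adj_iff {u v : KVert n} : (KG2 n).Adj u v ↔ Disjoint u.1 v.1 := Iff.rfl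

instance : DecidableRel (KG2 n).Adj := fun _ _ => decidable_of_iff _ adj_iff.symm

theorem degree_eq (v : KVert n) : (KG2 n).degree v = (n - 2).choose 2 := by
  have hmap : ((KG2 n).neighborFinset v).map (Function.Embedding.subtype _) =
      powersetCard 2 v.1ᶜ := by
    ext s
    simp [subset_compl_iff_disjoint_left, and_comm, disjoint_comm]
  rw [← card_neighborFinset_eq_degree, ← card_map, hmap, card_powersetCard, card_compl, v.2,
    Fintype.card_fin]

theorem exists_not_adj_of_adj {s u : KVert n} (h : (KG2 n).Adj s u) :
    ∃ w, ¬(KG2 n).Adj w s ∧ ¬(KG2 n).Adj w u := by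
  obtain ⟨x, hx⟩ : s.1.Nonempty := card_pos.1 (by rw [s.2]; omega)
  obtain ⟨y, hy⟩ : u.1.Nonempty := card_pos.1 (by rw [u.2]; omega)
  have hxy : x ≠ y := fun hxy => disjoint_left.1 h hx (hxy ▸ hy)
  refine ⟨KVert.pair hxy, ?_, ?_⟩ <;> simp [KVert.pair, disjoint_insert_left, hx, hy]

theorem three_le_card_of_isTotalDomSet (hn : 2 ≤ n) {S : Finset (KVert n)}
    (hS : IsTotalDomSet (KG2 n) S) : 3 ≤ #S := by
  have : Nonempty (KVert n) := ⟨KVert.pair (a := ⟨0, by omega⟩) (b := ⟨1, by omega⟩) (by simp)⟩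
  obtain ⟨s, hs, u, hu, hsu⟩ := hS.exists_adj
  by_contra! hS_card
  have hS_eq : S = {s, u} := (eq_of_subset_of_card_le (by simp_all [insert_subset_iff])
      (by rw [card_pair hsu.ne]; omega)).symm
  obtain ⟨w, hws, hwu⟩ := exists_not_adj_of_adj hsu
  obtain ⟨t, ht, hwt⟩ := hS w
  rw [mem_coe, hS_eq, mem_insert, mem_singleton] at ht
  rcases ht with rfl | rfl <;> contradiction

theorem isTotalDomSet_of_pairwise_disjoint {p q r : KVert n} (hpq : Disjoint p.1 q.1)
    (hpr : Disjoint p.1 r.1) (hqr : Disjoint q.1 r.1) :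
    IsTotalDomSet (KG2 n) ↑({p, q, r} : Finset (KVert n)) := by
  intro v
  by_contra! hv
  simp only [coe_insert, coe_singleton, Set.mem_insert_iff, Set.mem_singleton_iff,
    forall_eq_or_imp, forall_eq, adj_iff] at hv
  have := three_le_card_of_not_disjoint hpq hpr hqr hv.1 hv.2.1 hv.2.2
  rw [v.2] at this
  omega

theorem exists_pairwise_disjoint (hn : 6 ≤ n) :
    ∃ p q r : KVert n, Disjoint p.1 q.1 ∧ Disjoint p.1 r.1 ∧ Disjoint q.1 r.1 := by
  let a : Fin 6 ↪ Fin n := Fin.castLEEmb hn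
  refine ⟨KVert.pair (a.injective.ne (show (0 : Fin 6) ≠ 1 by decide)),
    KVert.pair (a.injective.ne (show (2 : Fin 6) ≠ 3 by decide)),
    KVert.pair (a.injective.ne (show (4 : Fin 6) ≠ 5 by decide)), ?_, ?_, ?_⟩ <;>
  simp [KVert.pair, a.injective.eq_iff]

theorem totalDomNum_of_six_le (hn : 6 ≤ n) : totalDomNum (KG2 n) = 3 := by
  obtain ⟨p, q, r, hpq, hpr, hqr⟩ := exists_pairwise_disjoint hn
  refine totalDomNum_eq_of_forall_le_card
    (fun _ hS => three_le_card_of_isTotalDomSet (by omega) hS)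
    ⟨{p, q, r}, isTotalDomSet_of_pairwise_disjoint hpq hpr hqr, card_eq_three.2
      ⟨p, q, r, (KG2 n).ne_of_adj hpq, (KG2 n).ne_of_adj hpr, (KG2 n).ne_of_adj hqr, rfl⟩⟩

def complFour (v : KVert 4) : KVert 4 := ⟨v.1ᶜ, by rw [card_compl, v.2, Fintype.card_fin]⟩

theorem neighborSet_complFour (v : KVert 4) : (KG2 4).neighborSet (complFour v) = {v} := by
  ext u
  rw [mem_neighborSet, adj_iff, Set.mem_singleton_iff, complFour, disjoint_compl_left_iff]
  refine ⟨fun h => Subtype.ext (eq_of_subset_of_card_le h (by rw [u.2, v.2])), ?_⟩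
  rintro rfl
  exact subset_refl _

theorem isTotalDomSet_four_iff {S : Set (KVert 4)} : IsTotalDomSet (KG2 4) S ↔ S = Set.univ :=
  ⟨fun hS => Set.eq_univ_of_forall fun v => hS.mem_of_neighborSet_eq (neighborSet_complFour v),
    by rintro rfl v; exact ⟨complFour v, trivial, disjoint_compl_right⟩⟩

theorem totalDomNum_four : totalDomNum (KG2 4) = 6 := by
  refine totalDomNum_eq_of_forall_le_card (fun S hS => ?_) ⟨univ, ?_, rfl⟩
  · rw [isTotalDomSet_four_iff, coe_eq_univ] at hS
    rw [hS]; rfl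
  · rw [coe_univ, isTotalDomSet_four_iff]

theorem four_le_card_of_isTotalDomSet_five {S : Finset (KVert 5)}
    (hS : IsTotalDomSet (KG2 5) S) : 4 ≤ #S := by
  have hdeg : (KG2 5).maxDegree ≤ 3 :=
    maxDegree_le_of_forall_degree_le _ 3 fun v => (degree_eq v).le
  have hcard : Fintype.card (KVert 5) = 10 := rfl
  have := hS.card_le_maxDegree_mul.trans (Nat.mul_le_mul_right _ hdeg)
  omega

-- Pairs inside `{2, 3, 4}` are disjoint from `{0, 1}`; any other pair has at most one point in
-- `{2, 3, 4}`, so it is disjoint from one of the three pairs there.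
theorem isTotalDomSet_five : IsTotalDomSet (KG2 5)
    ↑({v | v.1 = {0, 1} ∨ v.1 = {2, 3} ∨ v.1 = {2, 4} ∨ v.1 = {3, 4}} : Finset (KVert 5)) := by
  simp only [IsTotalDomSet, mem_coe, adj_iff]
  decide

theorem totalDomNum_five : totalDomNum (KG2 5) = 4 :=
  totalDomNum_eq_of_forall_le_card (fun _ => four_le_card_of_isTotalDomSet_five)
    ⟨_, isTotalDomSet_five, by decide⟩

end KG2

/-- For every `n ≥ 4`, the total domination number of `KG(n,2)` is
`6` if `n = 4`, `4` if `n = 5`, and `3` if `n ≥ 6`. -/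
theorem stmt1 (n : ℕ) (hn : 4 ≤ n) :
    totalDomNum (KG2 n) = if n = 4 then 6 else if n = 5 then 4 else 3 := by
  rcases (show n = 4 ∨ n = 5 ∨ 6 ≤ n by omega) with rfl | rfl | h6
  · exact KG2.totalDomNum_four
  · exact KG2.totalDomNum_five
  · rw [if_neg (by omega), if_neg (by omega)]
    exact KG2.totalDomNum_of_six_le h6
end

section
/- For every integer n ≥ 6, n − 2 ≤ χ_td(KG(n,2)) ≤ n + 1. -/
/-!
A colour class of `KG(n,2)` is an intersecting family of 2-sets, so it is either a star (all its
members share a symbol) or lies inside the three 2-subsets of a 3-set. If `s` of the `k` classes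
are stars, every 2-subset of the at least `n - s` symbols that are not star centres lies in one of
the other `k - s` classes, each holding at most three of them; `C(n - s, 2) ≤ 3 (k - s)` then
forces `k ≥ n - 2`.

For the upper bound, make `{0,1}`, `{2,3}`, `{4,5}` singleton classes: a 2-set is disjoint from
at least one of them, so they totally dominate. The remaining vertices are coloured as in the
classical `(n - 2)`-colouring: by their least element `m` while `m + 3 < n`, and the rest, which lie
inside `{n-3, n-2, n-1}`, by one more class.
-/

open Finset

namespace Finset

variable {α : Type*} [DecidableEq α] {s : Finset α} {a b : α}

lemma exists_eq_pair_of_mem (hs : #s = 2) (ha : a ∈ s) : ∃ b, b ≠ a ∧ s = {a, b} := by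
  obtain ⟨b, hb⟩ := card_eq_one.1 (by rw [card_erase_of_mem ha, hs] : #(s.erase a) = 1)
  have hb' : b ∈ s.erase a := hb ▸ mem_singleton_self b
  exact ⟨b, (mem_erase.1 hb').1, by rw [← insert_erase ha, hb]⟩

lemma mem_of_not_disjoint_pair (h : ¬Disjoint {a, b} s) (ha : a ∉ s) : b ∈ s := by
  simp_all [disjoint_insert_left]

end Finset

theorem Set.Intersecting.star_or_triangle {α : Type*} [DecidableEq α] {A : Set (Finset α)}
    (hA : A.Intersecting) (h2 : ∀ s ∈ A, #s = 2) :
    (∃ a, ∀ s ∈ A, a ∈ s) ∨ ∃ T : Finset α, #T ≤ 3 ∧ ∀ s ∈ A, s ⊆ T := by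
  rcases A.eq_empty_or_nonempty with rfl | ⟨u, hu⟩
  · exact Or.inr ⟨∅, by simp, by simp⟩
  obtain ⟨a, b, hab, rfl⟩ := card_eq_two.1 (h2 u hu)
  by_contra! ⟨hstar, htriangle⟩
  obtain ⟨w, hw, haw⟩ := hstar a
  obtain ⟨z, hz, hbz⟩ := hstar b
  obtain ⟨c, hcb, rfl⟩ :=
    exists_eq_pair_of_mem (h2 w hw) (mem_of_not_disjoint_pair (hA hu hw) haw)
  have hca : c ≠ a := by rintro rfl; simp at haw
  have haz : a ∈ z := mem_of_not_disjoint_pair (by rw [Finset.pair_comm]; exact hA hu hz) hbz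
  have hcz : c ∈ z := mem_of_not_disjoint_pair (hA hw hz) hbz
  obtain rfl : z = {a, c} :=
    (Finset.eq_of_subset_of_card_le (by simp [Finset.insert_subset_iff, haz, hcz])
      (by rw [h2 z hz, card_pair hca.symm])).symm
  obtain ⟨v, hv, hvT⟩ :=
    htriangle {a, b, c} ((card_insert_le _ _).trans (by simp [card_pair hcb.symm]))
  obtain ⟨x, hxv, hxT⟩ := not_subset.1 hvT
  obtain ⟨y, -, rfl⟩ := exists_eq_pair_of_mem (h2 v hv) hxv
  -- as `x ∉ {a, b, c}`, the other point `y` of `v` must lie on all three sides of the triangle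
  have hyu := mem_of_not_disjoint_pair (hA hv hu) (by simp_all)
  have hyw := mem_of_not_disjoint_pair (hA hv hw) (by simp_all)
  have hyz := mem_of_not_disjoint_pair (hA hv hz) (by simp_all)
  simp only [Finset.mem_insert, Finset.mem_singleton] at hyu hyw hyz
  grind

lemma Nat.three_mul_sub_two_le_choose_two (m : ℕ) : 3 * (m - 2) ≤ m.choose 2 := by
  rw [Nat.choose_two_right, Nat.le_div_iff_mul_le two_pos]
  rcases Nat.lt_or_ge m 5 with h | h
  · interval_cases m <;> simp
  · obtain ⟨j, rfl⟩ : ∃ j, m = j + 2 := ⟨m - 2, by omega⟩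
    rw [Nat.add_sub_cancel, show j + 2 - 1 = j + 1 by omega]
    nlinarith

theorem isTDColoring_fibers {V : Type*} {G : SimpleGraph V} {k : ℕ} (c : V → Fin k)
    (hsurj : Function.Surjective c) (hindep : ∀ u w, c u = c w → ¬G.Adj u w)
    (hdom : ∀ v, ∃ u, ∀ w, c w = c u → G.Adj v w) :
    IsTDColoring G fun i => c ⁻¹' {i} := by
  refine ⟨⟨fun v => ⟨c v, rfl, fun _ h => h.symm⟩, hsurj, fun i u hu w hw => hindep u w ?_⟩,
    fun v => ?_⟩
  · exact hu.trans hw.symm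
  · obtain ⟨u, hu⟩ := hdom v
    exact ⟨c u, ⟨u, rfl⟩, hu⟩

namespace KVert

variable {n : ℕ}

lemma nonempty (v : KVert n) : v.1.Nonempty := card_pos.1 (by rw [v.2]; exact two_pos)

def lo (v : KVert n) : Fin n := v.1.min' v.nonempty

def hi (v : KVert n) : Fin n := v.1.max' v.nonempty

lemma lo_lt_hi (v : KVert n) : v.lo < v.hi := min'_lt_max'_of_card _ (by rw [v.2]; norm_num)

lemma val_eq (v : KVert n) : v.1 = {v.lo, v.hi} :=
  (Finset.eq_of_subset_of_card_le
    (Finset.insert_subset (min'_mem _ _) (Finset.singleton_subset_iff.2 (max'_mem _ _)))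
    (by rw [v.2]; exact (card_pair v.lo_lt_hi.ne).ge)).symm

lemma disjoint_iff {u w : KVert n} :
    Disjoint u.1 w.1 ↔ u.lo ≠ w.lo ∧ u.lo ≠ w.hi ∧ u.hi ≠ w.lo ∧ u.hi ≠ w.hi := by
  rw [u.val_eq, w.val_eq]
  simp only [disjoint_insert_left, disjoint_singleton_left, mem_insert, mem_singleton]
  grind

lemma exists_lo_hi {a b : Fin n} (h : a < b) : ∃ v : KVert n, v.lo = a ∧ v.hi = b :=
  ⟨⟨{a, b}, card_pair h.ne⟩, by simp [lo, h.le], by simp [hi, h.le]⟩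

end KVert

namespace KG2

variable {n : ℕ}

theorem star_or_triangle_of_isProperColoring {k : ℕ} {C : Fin k → Set (KVert n)}
    (hC : IsProperColoring (KG2 n) C) (i : Fin k) :
    (∃ a, ∀ v ∈ C i, a ∈ v.1) ∨ ∃ T : Finset (Fin n), #T ≤ 3 ∧ ∀ v ∈ C i, v.1 ⊆ T := by
  have hint : (Subtype.val '' C i).Intersecting := by
    rintro _ ⟨u, hu, rfl⟩ _ ⟨w, hw, rfl⟩
    exact hC.2.2 i u hu w hw
  refine (hint.star_or_triangle (by rintro _ ⟨v, -, rfl⟩; exact v.2)).imp ?_ ?_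
  · exact fun ⟨a, ha⟩ => ⟨a, fun v hv => ha _ ⟨v, hv, rfl⟩⟩
  · exact fun ⟨T, hT, hsub⟩ => ⟨T, hT, fun v hv => hsub _ ⟨v, hv, rfl⟩⟩

theorem sub_two_le_of_isProperColoring {k : ℕ} {C : Fin k → Set (KVert n)}
    (hC : IsProperColoring (KG2 n) C) : n - 2 ≤ k := by
  classical
  rcases Nat.eq_zero_or_pos n with rfl | hn
  · simp
  have hclass : ∀ i, ∃ (a : Fin n) (T : Finset (Fin n)), #T ≤ 3 ∧
      ((∀ v ∈ C i, a ∈ v.1) ∨ ∀ v ∈ C i, v.1 ⊆ T) := fun i =>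
    (star_or_triangle_of_isProperColoring hC i).elim (fun ⟨a, ha⟩ => ⟨a, ∅, by simp, .inl ha⟩)
      fun ⟨T, hT, hsub⟩ => ⟨⟨0, hn⟩, T, hT, .inr hsub⟩
  choose center T hT hstar using hclass
  set St := univ.filter fun i => ∀ v ∈ C i, center i ∈ v.1
  set U := univ \ St.image center
  have hcover : U.powersetCard 2 ⊆ (univ \ St).biUnion fun i => (T i).powersetCard 2 := by
    intro p hp
    obtain ⟨hpU, hp2⟩ := mem_powersetCard.1 hp
    obtain ⟨i, hi, -⟩ := hC.1 ⟨p, hp2⟩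
    have hiSt : i ∉ St := fun hiSt =>
      (mem_sdiff.1 (hpU ((mem_filter.1 hiSt).2 _ hi))).2 (mem_image_of_mem center hiSt)
    exact mem_biUnion.2 ⟨i, by simpa using hiSt, mem_powersetCard.2
      ⟨((hstar i).resolve_left fun h => hiSt (by simpa [St] using h)) _ hi, hp2⟩⟩
  have hU : n - #St ≤ #U := by
    have := card_image_le (s := St) (f := center)
    rw [card_sdiff_of_subset (subset_univ _), card_univ, Fintype.card_fin]
    omega
  have hStk : #St ≤ k := (card_filter_le _ _).trans (by simp)
  have hcount : (#U).choose 2 ≤ 3 * (k - #St) :=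
    calc (#U).choose 2 = #(U.powersetCard 2) := (card_powersetCard 2 U).symm
      _ ≤ #((univ \ St).biUnion fun i => (T i).powersetCard 2) := card_le_card hcover
      _ ≤ #(univ \ St) * 3 := card_biUnion_le_card_mul _ _ _ fun i _ => by
          rw [card_powersetCard]
          exact (Nat.choose_le_choose 2 (hT i)).trans (by decide)
      _ = 3 * (k - #St) := by rw [card_sdiff_of_subset (subset_univ _)]; simp [mul_comm]
  have := Nat.three_mul_sub_two_le_choose_two #U
  omega

/-- Colours `0, 1, 2` are the singleton classes `{2j, 2j+1}`, colour `m + 3` is the star of the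
remaining vertices with least element `m`, and colour `n` the triangle on `{n-3, n-2, n-1}`. -/
def tdColor (v : KVert n) : Fin (n + 1) :=
  if v.lo.val % 2 = 0 ∧ v.hi.val = v.lo.val + 1 ∧ v.lo.val < 6 then
    ⟨v.lo / 2, by have := v.lo.isLt; omega⟩
  else if h : v.lo.val + 3 < n then ⟨v.lo + 3, by omega⟩ else Fin.last n

lemma tdColor_val (v : KVert n) : (tdColor v : ℕ) =
    if v.lo.val % 2 = 0 ∧ v.hi.val = v.lo.val + 1 ∧ v.lo.val < 6 then v.lo.val / 2
    else if v.lo.val + 3 < n then v.lo.val + 3 else n := by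
  unfold tdColor
  split_ifs <;> rfl

lemma not_disjoint_of_tdColor_eq {u w : KVert n} (h : tdColor u = tdColor w) :
    ¬Disjoint u.1 w.1 := by
  rw [Fin.ext_iff, tdColor_val, tdColor_val] at h
  have := u.lo_lt_hi
  have := w.lo_lt_hi
  have := u.hi.isLt
  have := w.hi.isLt
  rw [KVert.disjoint_iff]
  simp only [ne_eq, Fin.ext_iff, Fin.lt_def] at *
  split_ifs at h <;> omega

lemma tdColor_surjective (hn : 6 ≤ n) : Function.Surjective (tdColor (n := n)) := by
  intro i
  obtain ⟨a, b, hab, hbn, hi⟩ : ∃ a b : ℕ, a < b ∧ b < n ∧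
      (if a % 2 = 0 ∧ b = a + 1 ∧ a < 6 then a / 2 else if a + 3 < n then a + 3 else n) = i := by
    have := i.isLt
    by_cases h3 : (i : ℕ) < 3
    · refine ⟨2 * i, 2 * i + 1, by omega, by omega, ?_⟩
      split_ifs <;> omega
    · refine ⟨i - 3, i - 1, by omega, by omega, ?_⟩
      split_ifs <;> omega
  obtain ⟨v, hva, hvb⟩ := KVert.exists_lo_hi (show (⟨a, by omega⟩ : Fin n) < ⟨b, hbn⟩ from hab)
  exact ⟨v, Fin.ext (by rw [tdColor_val, hva, hvb]; exact hi)⟩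

lemma tdColor_of_pair {v : KVert n} {j : ℕ} (hj : j < 3) (hlo : (v.lo : ℕ) = 2 * j)
    (hhi : (v.hi : ℕ) = 2 * j + 1) : (tdColor v : ℕ) = j := by
  rw [tdColor_val, if_pos (by omega)]
  omega

lemma lo_hi_of_tdColor_lt_three (hn : 3 ≤ n) {v : KVert n} (h : (tdColor v : ℕ) < 3) :
    (v.lo : ℕ) = 2 * tdColor v ∧ (v.hi : ℕ) = 2 * tdColor v + 1 := by
  rw [tdColor_val] at h ⊢
  split_ifs at h ⊢ <;> omega

lemma exists_forall_tdColor_eq_disjoint (hn : 6 ≤ n) (v : KVert n) :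
    ∃ u, ∀ w, tdColor w = tdColor u → Disjoint v.1 w.1 := by
  obtain ⟨j, hj, hjv⟩ := exists_mem_notMem_of_card_lt_card
    (s := {(v.lo : ℕ) / 2, (v.hi : ℕ) / 2}) (t := range 3) (card_le_two.trans_lt (by simp))
  simp only [mem_range, mem_insert, mem_singleton, not_or] at hj hjv
  obtain ⟨u, hua, hub⟩ := KVert.exists_lo_hi
    (show (⟨2 * j, by omega⟩ : Fin n) < ⟨2 * j + 1, by omega⟩ from Nat.lt_succ_self _)
  have hu : (tdColor u : ℕ) = j := tdColor_of_pair hj (by simp [hua]) (by simp [hub])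
  refine ⟨u, fun w hw => ?_⟩
  obtain ⟨hwlo, hwhi⟩ := lo_hi_of_tdColor_lt_three (by omega) (hw ▸ hu ▸ hj)
  rw [hw, hu] at hwlo hwhi
  rw [KVert.disjoint_iff]
  simp only [ne_eq, Fin.ext_iff]
  omega

theorem exists_isTDColoring (hn : 6 ≤ n) :
    ∃ C : Fin (n + 1) → Set (KVert n), IsTDColoring (KG2 n) C :=
  ⟨_, isTDColoring_fibers tdColor (tdColor_surjective hn) (fun _ _ => not_disjoint_of_tdColor_eq)
    (exists_forall_tdColor_eq_disjoint hn)⟩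

end KG2

/-- For every `n ≥ 6`, `n - 2 ≤ χ_td(KG(n,2)) ≤ n + 1`. -/
theorem stmt2 (n : ℕ) (hn : 6 ≤ n) :
    n - 2 ≤ tdChromNum (KG2 n) ∧ tdChromNum (KG2 n) ≤ n + 1 := by
  have hTD := KG2.exists_isTDColoring hn
  obtain ⟨C, hC⟩ := Nat.sInf_mem (s := {k | ∃ C : Fin k → Set (KVert n), IsTDColoring (KG2 n) C})
    ⟨n + 1, hTD⟩
  exact ⟨KG2.sub_two_le_of_isProperColoring hC.1, Nat.sInf_le hTD⟩
end

section
/- Let n ≥ 4 and k ≥ n − 2, and let f = (V_1, …, V_k) be a proper coloring of the Kneser graph KG(n,2) with k nonempty color classes. If there exists a symbol i ∈ {1,2,…,n} that appears in at least k − 1 of the color classes (i.e., at least k − 1 classes contain a vertex {i,j} for some j), then f is not a total dominator coloring. -/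
/-!
A class that totally dominates a vertex `{i, x}` consists of vertices disjoint from it, so the
symbol `i` does not appear in that class. Since `i` appears in all but at most one class, every
vertex through `i` is dominated by the same class `C m`. Pick a vertex `u ∈ C m` and a symbol
`c ∈ u` (necessarily `c ≠ i`): the vertex `{i, c}` must be dominated by `C m`, yet it meets `u`.
-/

theorem Set.subsingleton_compl_of_card_sub_one_le_ncard {α : Type*} [Finite α] {S : Set α}
    (h : Nat.card α - 1 ≤ S.ncard) : Sᶜ.Subsingleton := by
  have hsum := S.ncard_add_ncard_compl
  rw [← Set.ncard_le_one_iff_subsingleton]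
  omega

namespace KG2

variable {n : ℕ}

def pair {a b : Fin n} (h : a ≠ b) : KVert n := ⟨{a, b}, Finset.card_pair h⟩

theorem exists_mem_ne (v : KVert n) (i : Fin n) : ∃ c ∈ v.1, c ≠ i := by
  by_contra! h
  have hsub : v.1 ⊆ {i} := fun c hc => Finset.mem_singleton.mpr (h c hc)
  simpa [v.2] using Finset.card_le_card hsub

theorem notMem_of_forall_adj {A : Set (KVert n)} {v : KVert n} {i : Fin n} (hv : i ∈ v.1)
    (hA : ∀ u ∈ A, (KG2 n).Adj v u) : ∀ u ∈ A, i ∉ u.1 :=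
  fun u hu => Finset.disjoint_left.mp (hA u hu) hv

end KG2

theorem stmt3_general (n k : ℕ) (hn : 4 ≤ n)
    (C : Fin k → Set (KVert n))
    (i : Fin n)
    (hi : k - 1 ≤ {j : Fin k | ∃ v ∈ C j, i ∈ v.1}.ncard) :
    ¬ IsTDColoring (KG2 n) C := by
  rintro ⟨-, hdom⟩
  set S := {j : Fin k | ∃ v ∈ C j, i ∈ v.1}
  have hS : Sᶜ.Subsingleton :=
    Set.subsingleton_compl_of_card_sub_one_le_ncard (by simpa using hi)
  have avoid {v : KVert n} {m : Fin k} (hv : i ∈ v.1) (hm : ∀ u ∈ C m, (KG2 n).Adj v u) :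
      m ∈ Sᶜ :=
    fun ⟨u, hu, hiu⟩ => KG2.notMem_of_forall_adj hv hm u hu hiu
  have : Nontrivial (Fin n) := Fin.nontrivial_iff_two_le.mpr (by omega)
  obtain ⟨a, ha⟩ := exists_ne i
  obtain ⟨m, ⟨u, hu⟩, hm⟩ := hdom (KG2.pair ha.symm)
  obtain ⟨c, hc, hci⟩ := KG2.exists_mem_ne u i
  obtain ⟨m', -, hm'⟩ := hdom (KG2.pair hci.symm)
  obtain rfl : m' = m := hS (avoid (by simp [KG2.pair]) hm') (avoid (by simp [KG2.pair]) hm)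
  exact KG2.notMem_of_forall_adj (by simp [KG2.pair]) hm' u hu hc

/-- Let `n ≥ 4`, `k ≥ n - 2`, and let `C` be a proper coloring of
`KG(n,2)` with `k` nonempty color classes. If some symbol `i` appears in at least
`k - 1` of the color classes, then `C` is not a total dominator coloring. -/
theorem stmt3 (n k : ℕ) (hn : 4 ≤ n) (hk : n - 2 ≤ k)
    (C : Fin k → Set (KVert n)) (hC : IsProperColoring (KG2 n) C)
    (i : Fin n)
    (hi : k - 1 ≤ {j : Fin k | ∃ v ∈ C j, i ∈ v.1}.ncard) :
    ¬ IsTDColoring (KG2 n) C :=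
  stmt3_general n k hn C i hi
end

section
/- For every integer n ≥ 7, the following partition of the vertices of KG(n,2) into n classes is a total dominator coloring: V_1 = {{1,2}}, V_2 = {{3,4}}, V_3 = {{2,5},{2,6},{5,6}}, V_4 = {{1,5},{1,6}}, V_5 = {{3,1},{3,2},{3,5},{3,6}}, V_6 = {{4,1},{4,2},{4,5},{4,6}}, and for 7 ≤ i ≤ n, V_i = { {i,k} : k ≠ i, 1 ≤ k ≤ n } \ (V_1 ∪ ⋯ ∪ V_{i−1}). -/
/-- The set of symbols of a vertex, as natural numbers. -/
def symbs {n : ℕ} (v : KVert n) : Finset ℕ := v.1.image Fin.val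

/-- The color classes of the model coloring of `KG(n,2)` (symbols `0,…,n-1` playing the
role of the paper's `1,…,n`):
`V 0 = {{0,1}}`, `V 1 = {{2,3}}`, `V 2 = {{1,4},{1,5},{4,5}}`, `V 3 = {{0,4},{0,5}}`,
`V 4 = {{2,0},{2,1},{2,4},{2,5}}`, `V 5 = {{3,0},{3,1},{3,4},{3,5}}`, and for `i ≥ 6`,
`V i = {{i,k} : k ≠ i} \ (V 0 ∪ ⋯ ∪ V (i-1))`. -/
def modelClass (n : ℕ) : ℕ → Set (KVert n)
  | 0 => {v | symbs v = {0, 1}}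
  | 1 => {v | symbs v = {2, 3}}
  | 2 => {v | symbs v = {1, 4} ∨ symbs v = {1, 5} ∨ symbs v = {4, 5}}
  | 3 => {v | symbs v = {0, 4} ∨ symbs v = {0, 5}}
  | 4 => {v | symbs v = {2, 0} ∨ symbs v = {2, 1} ∨ symbs v = {2, 4} ∨ symbs v = {2, 5}}
  | 5 => {v | symbs v = {3, 0} ∨ symbs v = {3, 1} ∨ symbs v = {3, 4} ∨ symbs v = {3, 5}}
  | (i + 6) =>
      {v | ∃ k : ℕ, k ≠ i + 6 ∧ symbs v = {i + 6, k}} \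
        ⋃ (j : Fin (i + 6)), modelClass n j
termination_by i => i
decreasing_by exact j.isLt

/-! The classes `V 0, …, V 5` only use the symbols `0, …, 5`; that they partition the pairs of
these symbols into intersecting families is a finite check. For `i ≥ 6`, a vertex lies in
`V i` exactly when `i` is its least symbol `≥ 6`; this places every other vertex in exactly one
class, and all members of `V i` share the symbol `i`. Finally a vertex meets at most two of the
symbols `0, …, 5`, and a finite check shows that some small class avoids any two of them, so the
vertex is adjacent to every member of that class. -/

open Finset

section Symbols

variable {n : ℕ}

lemma card_symbs (v : KVert n) : (symbs v).card = 2 := by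
  rw [symbs, card_image_of_injective _ Fin.val_injective, v.2]

lemma lt_of_mem_symbs {v : KVert n} {m : ℕ} (hm : m ∈ symbs v) : m < n := by
  obtain ⟨a, -, rfl⟩ := mem_image.mp hm
  exact a.isLt

lemma exists_symbs_eq {s : Finset ℕ} (hs : s.card = 2) (hsn : ∀ m ∈ s, m < n) :
    ∃ v : KVert n, symbs v = s := by
  have himage : (univ.filter fun a : Fin n => (a : ℕ) ∈ s).image Fin.val = s := by
    ext m
    simp only [mem_image, mem_filter, mem_univ, true_and]
    exact ⟨fun ⟨a, ha, hm⟩ => hm ▸ ha, fun hm => ⟨⟨m, hsn m hm⟩, hm, rfl⟩⟩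
  refine ⟨⟨univ.filter fun a : Fin n => (a : ℕ) ∈ s, ?_⟩, himage⟩
  rw [← card_image_of_injective _ Fin.val_injective, himage, hs]

lemma exists_ne_and_symbs_eq_pair_iff (v : KVert n) (a : ℕ) :
    (∃ b, b ≠ a ∧ symbs v = {a, b}) ↔ a ∈ symbs v := by
  refine ⟨fun ⟨b, _, hv⟩ => hv ▸ mem_insert_self a {b}, fun ha => ?_⟩
  obtain ⟨x, y, hxy, hv⟩ := card_eq_two.mp (card_symbs v)
  rw [hv, mem_insert, mem_singleton] at ha
  rcases ha with rfl | rfl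
  · exact ⟨y, hxy.symm, hv⟩
  · exact ⟨x, hxy, hv.trans (pair_comm x a)⟩

lemma KG2_adj_iff {u v : KVert n} : (KG2 n).Adj u v ↔ Disjoint (symbs u) (symbs v) :=
  (disjoint_image Fin.val_injective).symm

end Symbols

/-- The classes `modelClass n j`, `j < 6`, as finsets of pairs of symbols, so that facts about
them can be decided. -/
def smallClass : ℕ → Finset (Finset ℕ)
  | 0 => {{0, 1}}
  | 1 => {{2, 3}}
  | 2 => {{1, 4}, {1, 5}, {4, 5}}
  | 3 => {{0, 4}, {0, 5}}
  | 4 => {{2, 0}, {2, 1}, {2, 4}, {2, 5}}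
  | 5 => {{3, 0}, {3, 1}, {3, 4}, {3, 5}}
  | _ + 6 => ∅

section SmallClass

variable {i j : ℕ}

lemma smallClass_subset_powersetCard (hj : j < 6) : smallClass j ⊆ (range 6).powersetCard 2 := by
  revert j; decide

lemma smallClass_nonempty (hj : j < 6) : (smallClass j).Nonempty := by
  revert j; decide

lemma exists_mem_smallClass {s : Finset ℕ} (hs : s ∈ (range 6).powersetCard 2) :
    ∃ j < 6, s ∈ smallClass j := by
  revert s; decide

lemma disjoint_smallClass (hi : i < 6) (hj : j < 6) (hij : i ≠ j) :
    Disjoint (smallClass i) (smallClass j) :=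
  (by decide : ∀ i < 6, ∀ j < 6, i ≠ j → Disjoint (smallClass i) (smallClass j)) i hi j hj hij

lemma not_disjoint_of_mem_smallClass (hj : j < 6) {s t : Finset ℕ} (hs : s ∈ smallClass j)
    (ht : t ∈ smallClass j) : ¬ Disjoint s t :=
  (by decide : ∀ j < 6, ∀ s ∈ smallClass j, ∀ t ∈ smallClass j, ¬ Disjoint s t) j hj s hs t ht

-- Only the trace of `s` on the six symbols `0, …, 5` matters, which leaves finitely many cases.
lemma exists_smallClass_disjoint {s : Finset ℕ} (hs : s.card ≤ 2) :
    ∃ j < 6, ∀ t ∈ smallClass j, Disjoint s t := by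
  have key : ∀ s ∈ (range 6).powerset, s.card ≤ 2 →
      ∃ j < 6, ∀ t ∈ smallClass j, Disjoint s t := by
    decide
  obtain ⟨j, hj, hdisj⟩ := key (s ∩ range 6) (mem_powerset.mpr inter_subset_right)
    ((card_le_card inter_subset_left).trans hs)
  refine ⟨j, hj, fun t ht => ?_⟩
  have ht6 : t ⊆ range 6 := (mem_powersetCard.mp (smallClass_subset_powersetCard hj ht)).1
  exact disjoint_left.mpr fun m hms hmt =>
    disjoint_left.mp (hdisj t ht) (mem_inter.mpr ⟨hms, ht6 hmt⟩) hmt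

end SmallClass

section ModelClass

variable {n : ℕ}

lemma mem_modelClass_iff_of_lt_six {j : ℕ} (hj : j < 6) (v : KVert n) :
    v ∈ modelClass n j ↔ symbs v ∈ smallClass j := by
  interval_cases j <;> simp [modelClass, smallClass]

lemma symbs_subset_range_six {j : ℕ} (hj : j < 6) {v : KVert n} (hv : v ∈ modelClass n j) :
    symbs v ⊆ range 6 :=
  (mem_powersetCard.mp (smallClass_subset_powersetCard hj
    ((mem_modelClass_iff_of_lt_six hj v).mp hv))).1

lemma mem_modelClass_iff_of_six_le {i : ℕ} (hi : 6 ≤ i) (v : KVert n) :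
    v ∈ modelClass n i ↔ i ∈ symbs v ∧ ∀ m ∈ symbs v, 6 ≤ m → i ≤ m := by
  induction i using Nat.strong_induction_on with
  | _ i ih =>
  obtain ⟨i, rfl⟩ : ∃ k, i = k + 6 := ⟨i - 6, by omega⟩
  rw [modelClass]
  simp only [Set.mem_sdiff, Set.mem_ofPred_eq, Set.mem_iUnion, not_exists,
    exists_ne_and_symbs_eq_pair_iff]
  refine and_congr_right fun hmem => ⟨fun hnot => ?_, fun hleast j hj => ?_⟩
  · obtain ⟨k, -, hv⟩ := (exists_ne_and_symbs_eq_pair_iff v _).mpr hmem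
    simp only [hv, mem_insert, mem_singleton, forall_eq_or_imp, forall_eq, le_refl,
      implies_true, true_and]
    intro hk6
    by_contra hlt
    -- otherwise `v` would already lie in the earlier class `modelClass n k`
    refine hnot ⟨k, by omega⟩ ((ih k (by omega) hk6).mpr ⟨by simp [hv], ?_⟩)
    simp only [hv, mem_insert, mem_singleton, forall_eq_or_imp, forall_eq]
    omega
  · rcases lt_or_ge (j : ℕ) 6 with hj6 | hj6
    · simpa using symbs_subset_range_six hj6 hj hmem
    · have := hleast j ((ih j j.isLt hj6).mp hj).1 hj6
      omega

lemma lt_six_iff_symbs_subset {i : ℕ} {v : KVert n} (hv : v ∈ modelClass n i) :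
    i < 6 ↔ symbs v ⊆ range 6 := by
  refine ⟨fun hi => symbs_subset_range_six hi hv, fun hsub => ?_⟩
  by_contra! hi
  exact hi.not_gt (mem_range.mp (hsub ((mem_modelClass_iff_of_six_le hi v).mp hv).1))

lemma eq_of_mem_modelClass {i j : ℕ} {v : KVert n} (hi : v ∈ modelClass n i)
    (hj : v ∈ modelClass n j) : i = j := by
  by_cases hsub : symbs v ⊆ range 6
  · have hi6 := (lt_six_iff_symbs_subset hi).mpr hsub
    have hj6 := (lt_six_iff_symbs_subset hj).mpr hsub
    by_contra hij
    exact disjoint_left.mp (disjoint_smallClass hi6 hj6 hij)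
      ((mem_modelClass_iff_of_lt_six hi6 v).mp hi) ((mem_modelClass_iff_of_lt_six hj6 v).mp hj)
  · have hi6 := le_of_not_gt (mt (lt_six_iff_symbs_subset hi).mp hsub)
    have hj6 := le_of_not_gt (mt (lt_six_iff_symbs_subset hj).mp hsub)
    rw [mem_modelClass_iff_of_six_le hi6] at hi
    rw [mem_modelClass_iff_of_six_le hj6] at hj
    exact le_antisymm (hi.2 j hj.1 hj6) (hj.2 i hi.1 hi6)

lemma exists_mem_modelClass (hn : 6 ≤ n) (v : KVert n) : ∃ i < n, v ∈ modelClass n i := by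
  by_cases hsub : symbs v ⊆ range 6
  · obtain ⟨j, hj, hvj⟩ := exists_mem_smallClass (mem_powersetCard.mpr ⟨hsub, card_symbs v⟩)
    exact ⟨j, by omega, (mem_modelClass_iff_of_lt_six hj v).mpr hvj⟩
  -- `v` lies in the class of its least symbol `≥ 6`
  have hne : ((symbs v).filter (6 ≤ ·)).Nonempty := by
    obtain ⟨m, hm, hm6⟩ := not_subset.mp hsub
    exact ⟨m, mem_filter.mpr ⟨hm, by simpa using hm6⟩⟩
  obtain ⟨hi, hi6⟩ := mem_filter.mp (min'_mem _ hne)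
  refine ⟨_, lt_of_mem_symbs hi, (mem_modelClass_iff_of_six_le hi6 v).mpr
    ⟨hi, fun m hm hm6 => min'_le _ _ (mem_filter.mpr ⟨hm, hm6⟩)⟩⟩

lemma modelClass_nonempty (hn : 6 ≤ n) {i : ℕ} (hi : i < n) : (modelClass n i).Nonempty := by
  rcases lt_or_ge i 6 with hi6 | hi6
  · obtain ⟨s, hs⟩ := smallClass_nonempty hi6
    obtain ⟨hs6, hs2⟩ := mem_powersetCard.mp (smallClass_subset_powersetCard hi6 hs)
    obtain ⟨v, hv⟩ := exists_symbs_eq hs2 fun m hm => (mem_range.mp (hs6 hm)).trans_le hn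
    exact ⟨v, (mem_modelClass_iff_of_lt_six hi6 v).mpr (hv ▸ hs)⟩
  · obtain ⟨v, hv⟩ :=
      exists_symbs_eq (n := n) (s := {0, i}) (card_pair (by omega)) (by simp; omega)
    exact ⟨v, (mem_modelClass_iff_of_six_le hi6 v).mpr (by simp [hv])⟩

lemma not_adj_of_mem_modelClass {i : ℕ} {u w : KVert n} (hu : u ∈ modelClass n i)
    (hw : w ∈ modelClass n i) : ¬ (KG2 n).Adj u w := by
  rw [KG2_adj_iff]
  rcases lt_or_ge i 6 with hi | hi
  · exact not_disjoint_of_mem_smallClass hi ((mem_modelClass_iff_of_lt_six hi u).mp hu)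
      ((mem_modelClass_iff_of_lt_six hi w).mp hw)
  · exact not_disjoint_iff.mpr ⟨i, ((mem_modelClass_iff_of_six_le hi u).mp hu).1,
      ((mem_modelClass_iff_of_six_le hi w).mp hw).1⟩

lemma exists_modelClass_adj (v : KVert n) : ∃ j < 6, ∀ u ∈ modelClass n j, (KG2 n).Adj v u := by
  obtain ⟨j, hj, hdisj⟩ := exists_smallClass_disjoint (card_symbs v).le
  exact ⟨j, hj, fun u hu =>
    KG2_adj_iff.mpr (hdisj _ ((mem_modelClass_iff_of_lt_six hj u).mp hu))⟩

end ModelClass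

/-- For every `n ≥ 7`, the model partition of the vertices of
`KG(n,2)` into `n` classes is a total dominator coloring. -/
theorem stmt14 (n : ℕ) (hn : 7 ≤ n) :
    IsTDColoring (KG2 n) (fun i : Fin n => modelClass n (i : ℕ)) := by
  have hn6 : 6 ≤ n := by omega
  refine ⟨⟨fun v => ?_, fun i => modelClass_nonempty hn6 i.isLt,
    fun i u hu w hw => not_adj_of_mem_modelClass hu hw⟩, fun v => ?_⟩
  · obtain ⟨i, hi, hv⟩ := exists_mem_modelClass hn6 v
    exact ⟨⟨i, hi⟩, hv, fun j hj => Fin.ext (eq_of_mem_modelClass hj hv)⟩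
  · obtain ⟨j, hj, hadj⟩ := exists_modelClass_adj v
    exact ⟨⟨j, by omega⟩, modelClass_nonempty hn6 (by omega), hadj⟩
end
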